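/- Let n ≥ 2 and let X be an n-Hausdorff homogeneous space. Then |X| ≤ exp_{n-1}(c(X)·πχ(X)), where exp_{n-1} denotes the (n-1)-times iterated exponential 2^{2^{···^{2^κ}}}. -/

import Mathlib

open Cardinal Set

/-- The cellularity of `X`: the supremum of the cardinalities of pairwise
disjoint families of nonempty open sets, taken at least `ℵ₀`. -/
noncomputable def cellularity (X : Type u) [TopologicalSpace X] : Cardinal.{u} :=
  max ℵ₀ (⨆ 𝒰 : {𝒰 : Set (Set X) //
    (∀ U ∈ 𝒰, IsOpen U ∧ U.Nonempty) ∧ 𝒰.PairwiseDisjoint id}, #𝒰.1)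

/-- `B` is a local π-base at `x`: a family of nonempty open sets such that every
open neighbourhood of `x` contains a member of `B`. -/
def IsLocalPiBase {X : Type u} [TopologicalSpace X] (x : X) (B : Set (Set X)) : Prop :=
  (∀ U ∈ B, IsOpen U ∧ U.Nonempty) ∧ ∀ V : Set X, IsOpen V → x ∈ V → ∃ U ∈ B, U ⊆ V

/-- The π-character of `X`: the supremum over `x ∈ X` of the least cardinality
of a local π-base at `x`, taken at least `ℵ₀`. -/
noncomputable def piCharacter (X : Type u) [TopologicalSpace X] : Cardinal.{u} :=
  max ℵ₀ (⨆ x : X, sInf {κ | ∃ B : Set (Set X), IsLocalPiBase x B ∧ #B = κ})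

/-- A space is homogeneous if for all `x, y` some self-homeomorphism maps `x`
to `y`. -/
def Homogeneous (X : Type*) [TopologicalSpace X] : Prop :=
  ∀ x y : X, ∃ h : X ≃ₜ X, h x = y

/-- A space is `n`-Hausdorff if any `n` distinct points admit open
neighbourhoods with empty total intersection. -/
def NHausdorff (n : ℕ) (X : Type*) [TopologicalSpace X] : Prop :=
  ∀ f : Fin n ↪ X, ∃ U : Fin n → Set X,
    (∀ i, IsOpen (U i) ∧ f i ∈ U i) ∧ ⋂ i, U i = ∅

/-- `expIter k κ` is the `k`-times iterated exponential `2^{2^{⋯^{2^κ}}}`. -/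
def expIter : ℕ → Cardinal.{u} → Cardinal.{u}
  | 0, κ => κ
  | k + 1, κ => 2 ^ expIter k κ

/-!
Fix a point `p`, a local π-base `B` at `p` with `|B| ≤ πχ(X)`, and homeomorphisms `h x` with
`h x p = x`. For an `n`-set `s`, `n`-Hausdorffness at the points of `s`, pulled back to `p`, gives
`V ∈ B` with `⋂ x ∈ s, h x '' V = ∅`; this colours the `n`-subsets of `X` with at most
`κ = c(X) πχ(X)` colours. If `|X| > exp_{n-1} κ`, Erdős–Rado yields a set `H` with `|H| > κ` on
whose `n`-subsets the colour is a single `V`. But among more than `c(X)` nonempty open sets some `n`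
have a common point (take a maximal disjoint subfamily, apply the pigeonhole principle to the sets
meeting a common member of it, and induct on `n`), which fails for the sets `h x '' V`, `x ∈ H`.

Erdős–Rado is proved in the usual way. Call `b ↦ f (insert a b)`, for finite `b ⊆ X`, the type of
`a` over `X`. Some `A` of size at most `2^μ` contains, for every `X ⊆ A` with `|X| ≤ μ`, a
realization outside `X` of each type over `X` that is realized outside `X`. A point
`a₀ ∉ A` then yields a sequence of length `μ⁺` in `A` each of whose terms has the same type as
`a₀` over the earlier terms, so on this sequence the colour of a set does not change when its last
element is replaced by `a₀`, and the induction hypothesis applies to the sequence.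
-/

universe u

namespace Cardinal

theorem exists_lt_mk_preimage_singleton {α β : Type u} {κ : Cardinal.{u}} (hκ : ℵ₀ ≤ κ)
    (g : α → β) (hβ : #β ≤ κ) (hα : κ < #α) : ∃ b, κ < #(g ⁻¹' {b}) := by
  obtain ⟨b, hb⟩ := infinite_pigeonhole_card g (Order.succ κ) (Order.succ_le_of_lt hα)
    (hκ.trans (Order.le_succ κ))
    (by rw [(isRegular_succ hκ).cof_ord]; exact hβ.trans_lt (Order.lt_succ κ))
  exact ⟨b, (Order.lt_succ κ).trans_le hb⟩

theorem mk_finset_le_max (α : Type u) : #(Finset α) ≤ max ℵ₀ #α :=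
  (mk_le_of_injective (f := Finset.toList) fun _ _ h => Finset.perm_toList.mp (h ▸ .refl _)).trans
    (mk_list_le_max α)

theorem mk_finset_subset_le {α : Type u} (X : Set α) :
    #{b : Finset α // ↑b ⊆ X} ≤ max ℵ₀ #X := by
  classical
  refine (mk_le_of_injective (f := fun b => b.1.subtype (· ∈ X)) fun b b' h => ?_).trans
    (mk_finset_le_max X)
  have := congrArg (Finset.map (Function.Embedding.subtype (· ∈ X))) h
  simp only [Finset.subtype_map_of_mem fun x hx => b.2 hx,
    Finset.subtype_map_of_mem fun x hx => b'.2 hx] at this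
  exact Subtype.ext this

theorem mk_Iio_succ_ord_toType_le {μ : Cardinal.{u}} (k : (Order.succ μ).ord.ToType) :
    #(Set.Iio k) ≤ μ :=
  Order.lt_succ_iff.mp (by simpa using mk_Iio_lt k)

theorem exists_forall_lt_of_mk_le {μ : Cardinal.{u}} (hμ : ℵ₀ ≤ μ)
    {S : Set (Order.succ μ).ord.ToType} (hS : #S ≤ μ) : ∃ k, ∀ j ∈ S, j < k := by
  have hcof : #S < Order.cof (Order.succ μ).ord.ToType := by
    rw [Ordinal.cof_toType, (isRegular_succ hμ).cof_ord]
    exact hS.trans_lt (Order.lt_succ μ)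
  by_contra! h
  exact (Order.cof_le h).not_gt hcof

section Closure

variable {α : Type u} (F : Set α → Set α) (μ : Cardinal.{u})

def closureStep (A : Set α) : Set α :=
  A ∪ ⋃ X : {X : Set α // X ⊆ A ∧ #X ≤ μ}, F X

/-- Indexed by `μ⁺` so that, by regularity, a subset of the union of size at most `μ` already lies
in one stage. -/
def closureChain : (Order.succ μ).ord.ToType → Set α :=
  wellFounded_lt.fix fun k IH => ⋃ j : Set.Iio k, closureStep F μ (IH j j.2)

theorem closureChain_eq (k : (Order.succ μ).ord.ToType) :
    closureChain F μ k = ⋃ j : Set.Iio k, closureStep F μ (closureChain F μ j) :=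
  wellFounded_lt.fix_eq _ k

theorem closureStep_closureChain_subset {j k : (Order.succ μ).ord.ToType} (h : j < k) :
    closureStep F μ (closureChain F μ j) ⊆ closureChain F μ k := by
  rw [closureChain_eq F μ k]
  exact subset_iUnion (fun j : Set.Iio k => closureStep F μ (closureChain F μ j)) ⟨j, h⟩

variable {F μ}

theorem mk_closureStep_le (hμ : ℵ₀ ≤ μ) (hF : ∀ X : Set α, #X ≤ μ → #(F X) ≤ 2 ^ μ) {A : Set α}
    (hA : #A ≤ 2 ^ μ) : #(closureStep F μ A) ≤ 2 ^ μ := by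
  have h2μ : ℵ₀ ≤ 2 ^ μ := hμ.trans (cantor μ).le
  have hsubsets : #{X : Set α // X ⊆ A ∧ #X ≤ μ} ≤ 2 ^ μ :=
    calc #{X : Set α // X ⊆ A ∧ #X ≤ μ} ≤ max #A ℵ₀ ^ μ := mk_bounded_subset_le A μ
      _ ≤ (2 ^ μ) ^ μ := power_le_power_right (max_le hA h2μ)
      _ = 2 ^ μ := by rw [← power_mul, mul_eq_self hμ]
  calc #(closureStep F μ A)
      ≤ #A + #{X : Set α // X ⊆ A ∧ #X ≤ μ} * ⨆ X : {X : Set α // X ⊆ A ∧ #X ≤ μ}, #(F X) :=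
        (mk_union_le _ _).trans (add_le_add_right (mk_iUnion_le _) _)
    _ ≤ 2 ^ μ + 2 ^ μ * 2 ^ μ :=
        add_le_add hA (mul_le_mul' hsubsets (ciSup_le' fun X => hF X X.2.2))
    _ = 2 ^ μ := by rw [mul_eq_self h2μ, add_eq_self h2μ]

theorem mk_closureChain_le (hμ : ℵ₀ ≤ μ) (hF : ∀ X : Set α, #X ≤ μ → #(F X) ≤ 2 ^ μ)
    (k : (Order.succ μ).ord.ToType) : #(closureChain F μ k) ≤ 2 ^ μ := by
  have h2μ : ℵ₀ ≤ 2 ^ μ := hμ.trans (cantor μ).le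
  induction k using WellFoundedLT.induction with
  | ind k IH =>
    rw [closureChain_eq]
    calc _ ≤ #(Set.Iio k) * ⨆ j : Set.Iio k, #(closureStep F μ (closureChain F μ j)) :=
          mk_iUnion_le _
      _ ≤ 2 ^ μ * 2 ^ μ := mul_le_mul' ((mk_Iio_succ_ord_toType_le k).trans (cantor μ).le)
          (ciSup_le' fun j => mk_closureStep_le hμ hF (IH j j.2))
      _ = 2 ^ μ := mul_eq_self h2μ

theorem exists_closed_of_mk_le (hμ : ℵ₀ ≤ μ) (hF : ∀ X : Set α, #X ≤ μ → #(F X) ≤ 2 ^ μ) :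
    ∃ A : Set α, #A ≤ 2 ^ μ ∧ ∀ X ⊆ A, #X ≤ μ → F X ⊆ A := by
  have h2μ : ℵ₀ ≤ 2 ^ μ := hμ.trans (cantor μ).le
  refine ⟨⋃ k, closureChain F μ k, ?_, fun X hXA hX => ?_⟩
  · calc _ ≤ #(Order.succ μ).ord.ToType * ⨆ k, #(closureChain F μ k) := mk_iUnion_le _
      _ ≤ 2 ^ μ * 2 ^ μ := by
        refine mul_le_mul' ?_ (ciSup_le' (mk_closureChain_le hμ hF))
        rw [mk_toType, card_ord]
        exact Order.succ_le_of_lt (cantor μ)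
      _ = 2 ^ μ := mul_eq_self h2μ
  choose j hj using fun x : X => mem_iUnion.1 (hXA x.2)
  obtain ⟨k, hk⟩ := exists_forall_lt_of_mk_le hμ (mk_range_le.trans hX)
  obtain ⟨k', hk'⟩ := exists_forall_lt_of_mk_le hμ (S := {k})
    (by simpa using one_le_aleph0.trans hμ)
  have hXk : X ⊆ closureChain F μ k := fun x hx =>
    closureStep_closureChain_subset F μ (hk _ ⟨⟨x, hx⟩, rfl⟩) (subset_union_left (hj ⟨x, hx⟩))
  calc F X ⊆ closureStep F μ (closureChain F μ k) :=
        (subset_iUnion (fun Y : {Y : Set α // Y ⊆ closureChain F μ k ∧ #Y ≤ μ} => F Y)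
          ⟨X, hXk, hX⟩).trans subset_union_right
    _ ⊆ closureChain F μ k' := closureStep_closureChain_subset F μ (hk' k rfl)
    _ ⊆ ⋃ k, closureChain F μ k := subset_iUnion _ k'

end Closure

end Cardinal

theorem le_expIter (m : ℕ) (κ : Cardinal.{u}) : κ ≤ expIter m κ := by
  induction m with
  | zero => exact le_rfl
  | succ m ih => exact ih.trans (cantor _).le

namespace ErdosRado

section

variable {α C : Type u} [DecidableEq α] (f : Finset α → C)

def typeOver (X : Set α) (a : α) : {b : Finset α // ↑b ⊆ X} → C :=
  fun b => f (insert a b.1)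

theorem mk_range_typeOver_le {μ : Cardinal.{u}} (hμ : ℵ₀ ≤ μ) (hC : #C ≤ μ) {X : Set α}
    (hX : #X ≤ μ) : #(range (typeOver f X)) ≤ 2 ^ μ :=
  calc #(range (typeOver f X)) ≤ #({b : Finset α // ↑b ⊆ X} → C) := mk_set_le _
    _ = #C ^ #{b : Finset α // ↑b ⊆ X} := (power_def _ _).symm
    _ ≤ μ ^ μ := (power_le_power_right hC).trans <| power_le_power_left
        (aleph0_pos.trans_le hμ).ne' ((mk_finset_subset_le X).trans (max_le hμ hX))
    _ = 2 ^ μ := power_self_eq hμ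

variable [Nonempty α]

noncomputable def realize (X : Set α) (t : {b : Finset α // ↑b ⊆ X} → C) : α :=
  Classical.epsilon fun y => y ∉ X ∧ typeOver f X y = t

theorem realize_typeOver {X : Set α} {a : α} (ha : a ∉ X) :
    realize f X (typeOver f X a) ∉ X ∧
      typeOver f X (realize f X (typeOver f X a)) = typeOver f X a :=
  Classical.epsilon_spec (p := fun y => y ∉ X ∧ typeOver f X y = typeOver f X a) ⟨a, ha, rfl⟩

theorem mk_range_realize_typeOver_le {μ : Cardinal.{u}} (hμ : ℵ₀ ≤ μ) (hC : #C ≤ μ)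
    {X : Set α} (hX : #X ≤ μ) : #(range fun a => realize f X (typeOver f X a)) ≤ 2 ^ μ :=
  calc #(range (realize f X ∘ typeOver f X)) = #(realize f X '' range (typeOver f X)) := by
        rw [range_comp]
    _ ≤ 2 ^ μ := mk_image_le.trans (mk_range_typeOver_le f hμ hC hX)

variable (μ : Cardinal.{u}) (a₀ : α)

noncomputable def typeSeq : (Order.succ μ).ord.ToType → α :=
  wellFounded_lt.fix fun k IH =>
    realize f (range fun j : Iio k => IH j j.2) (typeOver f (range fun j : Iio k => IH j j.2) a₀)

theorem typeSeq_eq (k : (Order.succ μ).ord.ToType) :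
    typeSeq f μ a₀ k =
      realize f (typeSeq f μ a₀ '' Iio k) (typeOver f (typeSeq f μ a₀ '' Iio k) a₀) := by
  rw [typeSeq, wellFounded_lt.fix_eq, image_eq_range]

variable {f μ a₀}

theorem typeSeq_spec {A : Set α}
    (hA : ∀ X ⊆ A, #X ≤ μ → (range fun a => realize f X (typeOver f X a)) ⊆ A) (ha₀ : a₀ ∉ A)
    (k : (Order.succ μ).ord.ToType) :
    typeSeq f μ a₀ k ∈ A ∧ typeSeq f μ a₀ k ∉ typeSeq f μ a₀ '' Iio k ∧
      typeOver f (typeSeq f μ a₀ '' Iio k) (typeSeq f μ a₀ k) =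
        typeOver f (typeSeq f μ a₀ '' Iio k) a₀ := by
  induction k using WellFoundedLT.induction with
  | ind k IH =>
    have hsub : typeSeq f μ a₀ '' Iio k ⊆ A := by
      rintro _ ⟨j, hj, rfl⟩
      exact (IH j hj).1
    rw [typeSeq_eq]
    exact ⟨hA _ hsub (mk_image_le.trans (mk_Iio_succ_ord_toType_le k)) ⟨a₀, rfl⟩,
      realize_typeOver f fun h => ha₀ (hsub h)⟩

end

theorem exists_embedding_endHomogeneous {α C : Type u} [DecidableEq α] {μ : Cardinal.{u}}
    (hμ : ℵ₀ ≤ μ) (hC : #C ≤ μ) (hα : 2 ^ μ < #α) (f : Finset α → C) :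
    ∃ (a₀ : α) (e : (Order.succ μ).ord.ToType ↪ α), ∀ (t : Finset (Order.succ μ).ord.ToType) k,
      (∀ j ∈ t, j < k) → f (insert (e k) (t.image e)) = f (insert a₀ (t.image e)) := by
  have : Nonempty α := mk_ne_zero_iff.mp (zero_le.trans_lt hα).ne'
  obtain ⟨A, hA, hA_closed⟩ := exists_closed_of_mk_le hμ fun X hX =>
    mk_range_realize_typeOver_le f hμ hC hX
  obtain ⟨a₀, ha₀⟩ : Aᶜ.Nonempty :=
    nonempty_compl.mpr fun h => (hA.trans_lt hα).ne (by rw [h, mk_univ])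
  have hspec := typeSeq_spec (f := f) hA_closed ha₀
  have hinj : Function.Injective (typeSeq f μ a₀) := by
    intro j k hjk
    by_contra hne
    rcases lt_or_gt_of_ne hne with h | h
    · exact (hspec k).2.1 ⟨j, h, hjk⟩
    · exact (hspec j).2.1 ⟨k, h, hjk.symm⟩
  refine ⟨a₀, ⟨typeSeq f μ a₀, hinj⟩, fun t k ht => ?_⟩
  refine congrFun (hspec k).2.2 ⟨t.image (typeSeq f μ a₀), ?_⟩
  rw [Finset.coe_image]
  exact image_mono fun j hj => ht j hj

end ErdosRado

theorem erdos_rado (m : ℕ) {α C : Type u} {κ : Cardinal.{u}} (hκ : ℵ₀ ≤ κ) (hC : #C ≤ κ)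
    (hα : expIter m κ < #α) (f : Finset α → C) :
    ∃ c, ∃ H : Set α, κ < #H ∧ ∀ s : Finset α, ↑s ⊆ H → s.card = m + 1 → f s = c := by
  classical
  induction m generalizing α with
  | zero =>
    obtain ⟨c, hc⟩ := exists_lt_mk_preimage_singleton hκ (fun a => f {a}) hC hα
    refine ⟨c, _, hc, fun s hs hcard => ?_⟩
    obtain ⟨a, rfl⟩ := Finset.card_eq_one.mp hcard
    exact hs (Finset.mem_singleton_self a)
  | succ m IH =>
    have hκμ := le_expIter m κ
    obtain ⟨a₀, e, he⟩ := ErdosRado.exists_embedding_endHomogeneous (hκ.trans hκμ)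
      (hC.trans hκμ) hα f
    obtain ⟨c, H, hH, hHc⟩ := IH (by rw [mk_toType, card_ord]; exact Order.lt_succ _)
      fun t => f (insert a₀ (t.image e))
    refine ⟨c, e '' H, by rwa [mk_image_eq e.injective], fun s hsH hs => ?_⟩
    obtain ⟨t, htH, rfl⟩ := Finset.subset_set_image_iff.mp hsH
    rw [Finset.card_image_of_injective _ e.injective] at hs
    have ht : t.Nonempty := Finset.card_pos.mp (by omega)
    have hsplit : t.image e = insert (e (t.max' ht)) ((t.erase (t.max' ht)).image e) := by
      rw [← Finset.image_insert, Finset.insert_erase (t.max'_mem ht)]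
    rw [hsplit, he _ _ fun j hj => t.lt_max'_of_mem_erase_max' ht hj]
    exact hHc _ ((Finset.coe_subset.mpr (t.erase_subset _)).trans htH)
      (by rw [Finset.card_erase_of_mem (t.max'_mem ht), hs]; rfl)

theorem Set.exists_pairwiseDisjoint_maximal {ι β : Type*} [PartialOrder β] [OrderBot β]
    (A : Set ι) (O : ι → β) :
    ∃ D ⊆ A, D.PairwiseDisjoint O ∧ ∀ i ∈ A \ D, ∃ d ∈ D, ¬Disjoint (O i) (O d) := by
  obtain ⟨D, hD⟩ := zorn_subset {D | D ⊆ A ∧ D.PairwiseDisjoint O} fun c hc hchain =>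
    ⟨⋃₀ c, ⟨sUnion_subset fun D hD => (hc hD).1,
      (hchain.pairwiseDisjoint_sUnion O).mpr fun D hD => (hc hD).2⟩,
      fun _ => subset_sUnion_of_mem⟩
  refine ⟨D, hD.prop.1, hD.prop.2, fun i hi => ?_⟩
  by_contra! h
  exact hi.2 (hD.mem_of_prop_insert
    ⟨insert_subset hi.1 hD.prop.1, hD.prop.2.insert fun d hd _ => h d hd⟩)

section Topology

variable {X : Type u} [TopologicalSpace X]

theorem aleph0_le_cellularity : ℵ₀ ≤ cellularity X := le_max_left _ _

theorem aleph0_le_piCharacter : ℵ₀ ≤ piCharacter X := le_max_left _ _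

theorem mk_le_cellularity {𝒰 : Set (Set X)} (h𝒰 : ∀ U ∈ 𝒰, IsOpen U ∧ U.Nonempty)
    (hd : 𝒰.PairwiseDisjoint id) : #𝒰 ≤ cellularity X :=
  (le_ciSup bddAbove_of_small (⟨𝒰, h𝒰, hd⟩ : {𝒰 : Set (Set X) //
    (∀ U ∈ 𝒰, IsOpen U ∧ U.Nonempty) ∧ 𝒰.PairwiseDisjoint id})).trans (le_max_right _ _)

theorem mk_le_cellularity_of_pairwiseDisjoint {ι : Type u} {A : Set ι} {O : ι → Set X}
    (hO : ∀ i ∈ A, IsOpen (O i) ∧ (O i).Nonempty) (hd : A.PairwiseDisjoint O) :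
    #A ≤ cellularity X := by
  have hinj : A.InjOn O := fun i hi j hj hij => by
    by_contra hne
    have := hd hi hj hne
    rw [Function.onFun, hij, disjoint_self] at this
    exact (hO j hj).2.ne_empty this
  rw [← mk_image_eq_of_injOn _ _ hinj]
  exact mk_le_cellularity (by rintro _ ⟨i, hi, rfl⟩; exact hO i hi)
    (hinj.pairwiseDisjoint_image.mpr hd)

theorem exists_finset_card_eq_biInter_nonempty (m : ℕ) {ι : Type u} {A : Set ι} {O : ι → Set X}
    (hO : ∀ i ∈ A, IsOpen (O i) ∧ (O i).Nonempty) (hA : cellularity X < #A) :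
    ∃ s : Finset ι, ↑s ⊆ A ∧ s.card = m + 2 ∧ (⋂ i ∈ s, O i).Nonempty := by
  classical
  induction m generalizing A O with
  | zero =>
    by_contra! h
    refine hA.not_ge (mk_le_cellularity_of_pairwiseDisjoint hO fun i hi j hj hij => ?_)
    have := h {i, j} (by simp [insert_subset_iff, hi, hj]) (Finset.card_pair hij)
    simp only [Finset.set_biInter_insert, Finset.set_biInter_singleton] at this
    exact Set.disjoint_iff_inter_eq_empty.mpr this
  | succ m IH =>
    obtain ⟨D, hDA, hD, hmeet⟩ := A.exists_pairwiseDisjoint_maximal O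
    have hDc : #D ≤ cellularity X :=
      mk_le_cellularity_of_pairwiseDisjoint (fun i hi => hO i (hDA hi)) hD
    have hAD : cellularity X < #(A \ D : Set ι) := by
      by_contra! h
      refine hA.not_ge ?_
      calc #A = #(A \ D : Set ι) + #D := (mk_sdiff_add_mk hDA).symm
        _ ≤ cellularity X + cellularity X := add_le_add h hDc
        _ = cellularity X := add_eq_self aleph0_le_cellularity
    have : ∀ i : ↥(A \ D), ∃ d : D, (O i ∩ O d).Nonempty := fun i =>
      let ⟨d, hd, h⟩ := hmeet i i.2
      ⟨⟨d, hd⟩, not_disjoint_iff_nonempty_inter.mp h⟩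
    choose g hg using this
    obtain ⟨d, hd⟩ := exists_lt_mk_preimage_singleton aleph0_le_cellularity g hDc hAD
    obtain ⟨s, hs, hcard, z, hz⟩ := IH (A := Subtype.val '' (g ⁻¹' {d}))
      (O := fun i => O i ∩ O d) (by
        rintro _ ⟨i, hi, rfl⟩
        exact ⟨(hO i i.2.1).1.inter (hO d (hDA d.2)).1, (show g i = d from hi) ▸ hg i⟩)
      (by rwa [mk_image_eq Subtype.val_injective])
    have hsAD : ↑s ⊆ A \ D := hs.trans (image_subset_iff.mpr fun i _ => i.2)
    obtain ⟨i₀, hi₀⟩ : s.Nonempty := Finset.card_pos.mp (by omega)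
    rw [mem_iInter₂] at hz
    refine ⟨insert d.1 s, ?_, ?_, z, ?_⟩
    · rw [Finset.coe_insert]
      exact insert_subset (hDA d.2) (hsAD.trans sdiff_subset)
    · rw [Finset.card_insert_of_notMem fun h => (hsAD h).2 d.2, hcard]
    · rw [Finset.set_biInter_insert]
      exact ⟨(hz i₀ hi₀).2, mem_iInter₂.mpr fun i hi => (hz i hi).1⟩

theorem exists_isLocalPiBase_mk_le_piCharacter (x : X) :
    ∃ B, IsLocalPiBase x B ∧ #B ≤ piCharacter X := by
  have hne : {κ | ∃ B : Set (Set X), IsLocalPiBase x B ∧ #B = κ}.Nonempty :=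
    ⟨_, {U | IsOpen U ∧ U.Nonempty},
      ⟨fun _ hU => hU, fun V hV hxV => ⟨V, ⟨hV, x, hxV⟩, subset_rfl⟩⟩, rfl⟩
  obtain ⟨B, hB, hBκ⟩ := csInf_mem hne
  exact ⟨B, hB, hBκ ▸ (le_ciSup bddAbove_of_small x).trans (le_max_right _ _)⟩

theorem NHausdorff.exists_biInter_image_eq_empty {n : ℕ} (hX : NHausdorff n X) {p : X}
    {B : Set (Set X)} (hB : IsLocalPiBase p B) (h : X → X ≃ₜ X) (hp : ∀ x, h x p = x)
    {s : Finset X} (hs : s.card = n) : ∃ V ∈ B, ⋂ x ∈ s, h x '' V = ∅ := by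
  let e : Fin n ↪ X := (s.equivFinOfCardEq hs).symm.toEmbedding.trans (.subtype _)
  obtain ⟨U, hU, hUe⟩ := hX e
  obtain ⟨V, hVB, hVU⟩ := hB.2 (⋂ i, h (e i) ⁻¹' U i)
    (isOpen_iInter_of_finite fun i => (hU i).1.preimage (h (e i)).continuous)
    (mem_iInter.mpr fun i => by simpa [hp] using (hU i).2)
  refine ⟨V, hVB, subset_empty_iff.mp (hUe ▸ subset_iInter fun i => ?_)⟩
  calc ⋂ x ∈ s, h x '' V ⊆ h (e i) '' V := biInter_subset_of_mem (by simp [e])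
    _ ⊆ U i := image_subset_iff.mpr (hVU.trans (iInter_subset _ i))

end Topology

theorem stmt11 (n : ℕ) (hn : 2 ≤ n) (X : Type u) [TopologicalSpace X]
    (hX : NHausdorff n X) (hhom : Homogeneous X) :
    #X ≤ expIter (n - 1) (cellularity X * piCharacter X) := by
  obtain ⟨m, rfl⟩ : ∃ m, n = m + 2 := ⟨n - 2, by omega⟩
  set κ := cellularity X * piCharacter X
  have hcκ : cellularity X ≤ κ :=
    le_mul_of_one_le_right' (one_le_aleph0.trans aleph0_le_piCharacter)
  have hπκ : piCharacter X ≤ κ :=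
    le_mul_of_one_le_left' (one_le_aleph0.trans aleph0_le_cellularity)
  by_contra! hlarge
  obtain ⟨p⟩ : Nonempty X := mk_ne_zero_iff.mp (zero_le.trans_lt hlarge).ne'
  obtain ⟨B, hB, hBκ⟩ := exists_isLocalPiBase_mk_le_piCharacter p
  obtain ⟨U, hU, -⟩ := hB.2 univ isOpen_univ (mem_univ p)
  choose h hp using hhom p
  have hcolour : ∀ s : Finset X, ∃ V : B, s.card = m + 2 → ⋂ x ∈ s, h x '' V = ∅ := fun s => by
    by_cases hs : s.card = m + 2
    · obtain ⟨V, hVB, hV⟩ := hX.exists_biInter_image_eq_empty hB h hp hs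
      exact ⟨⟨V, hVB⟩, fun _ => hV⟩
    · exact ⟨⟨U, hU⟩, fun hs' => absurd hs' hs⟩
  choose colour hcolour using hcolour
  obtain ⟨V, H, hH, hHV⟩ := erdos_rado (m + 1) (aleph0_le_cellularity.trans hcκ)
    (hBκ.trans hπκ) hlarge colour
  obtain ⟨s, hsH, hs, hne⟩ := exists_finset_card_eq_biInter_nonempty m (O := fun x => h x '' V)
    (fun x _ => ⟨(h x).isOpen_image.mpr (hB.1 _ V.2).1, (hB.1 _ V.2).2.image _⟩) (hcκ.trans_lt hH)
  exact hne.ne_empty (hHV s hsH hs ▸ hcolour s hs)
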